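/- arXiv:2504.06534 — 2 statements merged into one kernel-verified Lean document; each statement's English description precedes it below -/
import Mathlib

section
/- Let u ≠ s be the predecessor of v in the shortest path tree T of the weighted disk graph G rooted at s. Then |uv| ≥ |r_v − r_u|, unless r_v < r_u and v is a leaf of T. -/
noncomputable section

/-- Points of the plane. -/
abbrev Pt := EuclideanSpace ℝ (Fin 2)

/-- Membership in the closed axis-parallel square of Euclidean diameter `d`
(side `d/√2`) centered at `p`. -/
def inSq (p : Pt) (d : ℝ) (x : Pt) : Prop :=
  ∀ i, |x i - p i| ≤ d / (2 * Real.sqrt 2)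

/-- Adjacency in the weighted disk graph: distinct points whose disks intersect. -/
def Adj (r : Pt → ℝ) (x y : Pt) : Prop := x ≠ y ∧ dist x y ≤ r x + r y

/-- A (simple) path from `s` to `v` in the weighted disk graph on `P`. -/
def IsPath (P : Set Pt) (r : Pt → ℝ) (s v : Pt) (L : List Pt) : Prop :=
  L.head? = some s ∧ L.getLast? = some v ∧ (∀ x ∈ L, x ∈ P) ∧ L.Nodup ∧ L.Chain' (Adj r)

/-- The length of a path: the sum of the Euclidean lengths of its edges. -/
def pathLen : List Pt → ℝ
  | [] => 0
  | [_] => 0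
  | a :: b :: L => dist a b + pathLen (b :: L)

/-- Shortest-path distance from `s` to `v` in the weighted disk graph on `P`. -/
def spDist (P : Set Pt) (r : Pt → ℝ) (s v : Pt) : ℝ :=
  sInf (pathLen '' {L | IsPath P r s v L})

/-!
Tree edges `a → b → c` of the shortest path tree can never be shortcut by an edge `ac`: the
direct route `s ⇝ a → c` would be a second shortest `s`–`c` path, contradicting uniqueness.
Hence `r a + r c < |ac|`, and the triangle inequality through `b` turns this into a radius gap
along `ab` or `bc`. For `u = prv v` with `r u ≤ r v` apply it to `prv u → u → v`; otherwise
`v` has a child `x`, and we apply it to `u → v → x`.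
-/

def IsShortestPath (P : Set Pt) (r : Pt → ℝ) (s v : Pt) (L : List Pt) : Prop :=
  IsPath P r s v L ∧ pathLen L = spDist P r s v

lemma pathLen_nonneg : ∀ L : List Pt, 0 ≤ pathLen L
  | [] => le_rfl
  | [_] => le_rfl
  | _ :: b :: L => add_nonneg dist_nonneg (pathLen_nonneg (b :: L))

lemma pathLen_append_cons : ∀ (A : List Pt) (c : Pt) (B : List Pt),
    pathLen (A ++ c :: B) = pathLen (A ++ [c]) + pathLen (c :: B)
  | [], c, B => by simp [pathLen]
  | [a], c, B => by simp [pathLen]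
  | a :: a' :: A, c, B => by
    simp only [List.cons_append, pathLen]
    rw [← List.cons_append, pathLen_append_cons (a' :: A) c B, List.cons_append]
    ring

lemma pathLen_concat : ∀ (L : List Pt) (b c : Pt), L.getLast? = some b →
    pathLen (L ++ [c]) = pathLen L + dist b c
  | [], b, c, h => by simp at h
  | [a], b, c, h => by
    obtain rfl : a = b := by simpa using h
    simp [pathLen]
  | a :: a' :: L, b, c, h => by
    have ih := pathLen_concat (a' :: L) b c (by simpa [List.getLast?_cons_cons] using h)
    simp only [List.cons_append, pathLen] at *
    rw [ih]
    ring

section Paths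

variable {P : Set Pt} {r : Pt → ℝ} {s : Pt}

lemma spDist_le_pathLen {v : Pt} {L : List Pt} (h : IsPath P r s v L) :
    spDist P r s v ≤ pathLen L :=
  csInf_le ⟨0, by rintro _ ⟨L', _, rfl⟩; exact pathLen_nonneg L'⟩ ⟨L, h, rfl⟩

lemma IsPath.concat {b c : Pt} {L : List Pt} (hL : IsPath P r s b L) (hcP : c ∈ P)
    (hcL : c ∉ L) (hbc : Adj r b c) : IsPath P r s c (L ++ [c]) := by
  obtain ⟨hhead, hlast, hmem, hnd, hch⟩ := hL
  have hLne : L ≠ [] := by rintro rfl; simp at hhead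
  refine ⟨by rwa [List.head?_append_of_ne_nil _ hLne], by simp, ?_, ?_, ?_⟩
  · simpa [or_imp, forall_and, hcP] using hmem
  · exact List.nodup_append.mpr
      ⟨hnd, List.nodup_singleton c, fun x hx y hy _ => hcL (by simp_all)⟩
  · refine hch.append (List.isChain_singleton c) ?_
    simp only [hlast, Option.mem_def, Option.some.injEq, List.head?_cons]
    rintro _ rfl _ rfl
    exact hbc

lemma IsPath.spDist_le_of_mem {b c : Pt} {L : List Pt} (hL : IsPath P r s b L) (hc : c ∈ L) :
    spDist P r s c ≤ pathLen L := by
  obtain ⟨hhead, -, hmem, hnd, hch⟩ := hL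
  obtain ⟨A, B, rfl⟩ := List.append_of_mem hc
  have hpre : A ++ [c] <+: A ++ c :: B := by simp
  have hpath : IsPath P r s c (A ++ [c]) :=
    ⟨by simpa [List.head?_append] using hhead, by simp,
      fun x hx => hmem x (hpre.subset hx), hnd.sublist hpre.sublist, hch.prefix hpre⟩
  calc spDist P r s c ≤ pathLen (A ++ [c]) := spDist_le_pathLen hpath
    _ ≤ pathLen (A ++ c :: B) := by
      rw [pathLen_append_cons A c B]; linarith [pathLen_nonneg (c :: B)]

lemma IsShortestPath.concat {b c : Pt} {L : List Pt} (hL : IsShortestPath P r s b L)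
    (hcP : c ∈ P) (hbc : Adj r b c) (hle : spDist P r s b + dist b c ≤ spDist P r s c) :
    IsShortestPath P r s c (L ++ [c]) := by
  obtain ⟨hpath, hlen⟩ := hL
  have hcL : c ∉ L := fun hc => by
    have := hpath.spDist_le_of_mem hc
    linarith [dist_pos.mpr hbc.1]
  have hpath' := hpath.concat hcP hcL hbc
  refine ⟨hpath', le_antisymm ?_ (spDist_le_pathLen hpath')⟩
  rw [pathLen_concat L b c hpath.2.1, hlen]
  exact hle

theorem radius_add_lt_dist_of_shortest_chain {a b c : Pt} (ha : ∃ L, IsShortestPath P r s a L)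
    (hc : ∃! L, IsShortestPath P r s c L) (hbP : b ∈ P) (hcP : c ∈ P)
    (hab : Adj r a b) (hbc : Adj r b c)
    (hdb : spDist P r s b = spDist P r s a + dist a b)
    (hdc : spDist P r s c = spDist P r s b + dist b c) :
    r a + r c < dist a c := by
  by_contra! hac
  obtain ⟨La, hLa⟩ := ha
  have hac_ne : a ≠ c := by
    rintro rfl
    linarith [dist_pos.mpr hab.1, dist_pos.mpr hbc.1]
  have via_b : IsShortestPath P r s c (La ++ [b] ++ [c]) :=
    (hLa.concat hbP hab hdb.ge).concat hcP hbc hdc.ge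
  have direct : IsShortestPath P r s c (La ++ [c]) :=
    hLa.concat hcP ⟨hac_ne, hac⟩ (by linarith [dist_triangle a b c])
  have := congrArg List.length (hc.unique via_b direct)
  simp at this

end Paths

theorem predecessor_radius_gap_general
    (P : Set Pt) (r : Pt → ℝ)
    (s : Pt)
    (huniq : ∀ v ∈ P, ∃! L, IsPath P r s v L ∧ pathLen L = spDist P r s v)
    (prv : Pt → Pt)
    (hprv : ∀ v ∈ P, v ≠ s → prv v ∈ P ∧ Adj r (prv v) v ∧
      spDist P r s v = spDist P r s (prv v) + dist (prv v) v)
    (v : Pt) (hv : v ∈ P) (hvs : v ≠ s) (hus : prv v ≠ s)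
    (hnot : ¬ (r v < r (prv v) ∧ ¬ ∃ x ∈ P, x ≠ s ∧ prv x = v)) :
    |r v - r (prv v)| ≤ dist (prv v) v := by
  obtain ⟨huP, huv, hdv⟩ := hprv v hv hvs
  rcases le_or_gt (r (prv v)) (r v) with hle | hlt
  · obtain ⟨hwP, hwu, hdu⟩ := hprv (prv v) huP hus
    have := radius_add_lt_dist_of_shortest_chain (huniq _ hwP).exists (huniq v hv) huP hv
      hwu huv hdu hdv
    rw [abs_of_nonneg (sub_nonneg.mpr hle)]
    linarith [dist_triangle (prv (prv v)) (prv v) v, hwu.2]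
  · obtain ⟨x, hxP, hxs, rfl⟩ : ∃ x ∈ P, x ≠ s ∧ prv x = v := by
      by_contra hleaf
      exact hnot ⟨hlt, hleaf⟩
    obtain ⟨-, hvx, hdx⟩ := hprv x hxP hxs
    have := radius_add_lt_dist_of_shortest_chain (huniq _ huP).exists (huniq x hxP) hv hxP
      huv hvx hdv hdx
    rw [abs_sub_comm, abs_of_nonneg (sub_nonneg.mpr hlt.le)]
    linarith [dist_triangle (prv (prv x)) (prv x) x, hvx.2]

/-- Assume every vertex of `P` is connected to `s` and shortest paths
from `s` are unique, and let `prv` be the predecessor function of the resulting shortest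
path tree `T` rooted at `s` (so for `v ≠ s`, `prv v` is adjacent to `v` and
`d(v) = d(prv v) + |prv v, v|`). If `u = prv v ≠ s` is the predecessor of `v`, then
`|uv| ≥ |r v − r u|`, unless `r v < r u` and `v` is a leaf of `T` (a predecessor of
no vertex). -/
theorem predecessor_radius_gap
    (P : Set Pt) (r : Pt → ℝ) (hr : ∀ p ∈ P, 1 ≤ r p)
    (s : Pt) (hs : s ∈ P)
    (hconn : ∀ v ∈ P, ∃ L, IsPath P r s v L)
    (huniq : ∀ v ∈ P, ∃! L, IsPath P r s v L ∧ pathLen L = spDist P r s v)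
    (prv : Pt → Pt)
    (hprv : ∀ v ∈ P, v ≠ s → prv v ∈ P ∧ Adj r (prv v) v ∧
      spDist P r s v = spDist P r s (prv v) + dist (prv v) v)
    (v : Pt) (hv : v ∈ P) (hvs : v ≠ s) (hus : prv v ≠ s)
    (hnot : ¬ (r v < r (prv v) ∧ ¬ ∃ x ∈ P, x ≠ s ∧ prv x = v)) :
    |r v - r (prv v)| ≤ dist (prv v) v :=
  predecessor_radius_gap_general P r s huniq prv hprv v hv hvs hus hnot
end
end

section
/- Let c and c' be grid cells (axis-parallel squares with diameters that are powers of 2), let v ∈ P_mid(c) and u ∈ P_mid(c'), and suppose v is a small neighbor of u, i.e., uv is an edge of G with r_u ≥ 2r_v. Then |c| < |c'| (hence 2|c| ≤ |c'|), and the Euclidean distance from v to the center p(c') satisfies |v p(c')| < 33|c'|. -/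
noncomputable section

/-! The cell sizes are forced apart by the radii: `16|c| ≤ 2 r_v ≤ r_u < 16|c'|`, and between
powers of two a strict inequality gains a factor 2. For the distance, walk from `v` to `u` along
the edge (length `≤ r_u + r_v ≤ 2 r_u < 32|c'|`) and then from `u` to the center of `c'`
(at most `|c'|/2`). -/

theorem EuclideanSpace.dist_le_sqrt_card_mul {ι : Type*} [Fintype ι]
    {x y : EuclideanSpace ℝ ι} {s : ℝ} (h : ∀ j, |x j - y j| ≤ s) :
    dist x y ≤ √(Fintype.card ι) * s := by
  cases isEmpty_or_nonempty ι
  · simp [EuclideanSpace.dist_eq]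
  have hs : 0 ≤ s := (abs_nonneg _).trans (h (Classical.arbitrary ι))
  calc dist x y = √(∑ j, (x j - y j) ^ 2) := by simp [EuclideanSpace.dist_eq, Real.dist_eq]
    _ ≤ √(∑ _ : ι, s ^ 2) :=
      Real.sqrt_le_sqrt <| Finset.sum_le_sum fun j _ ↦
        sq_le_sq' (abs_le.1 (h j)).1 (abs_le.1 (h j)).2
    _ = √(Fintype.card ι) * s := by simp [Real.sqrt_mul, Real.sqrt_sq hs]

theorem dist_le_half_of_inSq {p x : Pt} {d : ℝ} (h : inSq p d x) : dist x p ≤ d / 2 := by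
  have h2 : (0 : ℝ) < √2 := by positivity
  calc dist x p ≤ √2 * (d / (2 * √2)) := by
        simpa using EuclideanSpace.dist_le_sqrt_card_mul h
    _ = d / 2 := by field_simp

theorem mul_zpow_le_zpow_of_zpow_lt {α : Type*} [Field α] [LinearOrder α]
    [IsStrictOrderedRing α] {a : α} (ha : 1 < a) {m n : ℤ} (h : a ^ m < a ^ n) :
    a * a ^ m ≤ a ^ n := by
  rw [mul_comm, ← zpow_add_one₀ (by positivity)]
  exact zpow_le_zpow_right₀ ha.le ((zpow_lt_zpow_iff_right₀ ha).1 h)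

theorem small_neighbor_cell_bound_general
    (r : Pt → ℝ)
    (i i' : ℤ) (pc' : Pt)
    (v u : Pt)
    (hvr : 8 * (2:ℝ) ^ i ≤ r v)
    (huc : inSq pc' ((2:ℝ) ^ i') u)
    (hur' : r u < 16 * (2:ℝ) ^ i')
    (hedge : Adj r u v) (hirr : 2 * r v ≤ r u) :
    (2:ℝ) ^ i < (2:ℝ) ^ i' ∧ 2 * (2:ℝ) ^ i ≤ (2:ℝ) ^ i' ∧
      dist v pc' < 33 * (2:ℝ) ^ i' := by
  have hcell : (2:ℝ) ^ i < 2 ^ i' := by linarith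
  have hrv : 0 < r v := lt_of_lt_of_le (by positivity) hvr
  refine ⟨hcell, mul_zpow_le_zpow_of_zpow_lt one_lt_two hcell, ?_⟩
  calc dist v pc' ≤ dist u v + dist u pc' := dist_triangle_left _ _ _
    _ ≤ (r u + r v) + 2 ^ i' / 2 := add_le_add hedge.2 (dist_le_half_of_inSq huc)
    _ < 33 * 2 ^ i' := by linarith

/-- Let `c` and `c'` be grid cells (axis-parallel squares of diameters
`2^i`, `2^i'` centered at `pc`, `pc'`), let `v ∈ P_mid(c)` and `u ∈ P_mid(c')`, and
suppose `v` is a small neighbor of `u`: `uv` is an edge of `G` with `r u ≥ 2 r v`. Then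
`|c| < |c'|` (hence `2|c| ≤ |c'|`), and `|v p(c')| < 33·|c'|`. -/
theorem small_neighbor_cell_bound
    (P : Set Pt) (r : Pt → ℝ) (hr : ∀ p ∈ P, 1 ≤ r p)
    (i i' : ℤ) (pc pc' : Pt)
    (v u : Pt) (hvP : v ∈ P) (huP : u ∈ P)
    (hvc : inSq pc ((2:ℝ) ^ i) v)
    (hvr : 8 * (2:ℝ) ^ i ≤ r v) (hvr' : r v < 16 * (2:ℝ) ^ i)
    (huc : inSq pc' ((2:ℝ) ^ i') u)
    (hur : 8 * (2:ℝ) ^ i' ≤ r u) (hur' : r u < 16 * (2:ℝ) ^ i')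
    (hedge : Adj r u v) (hirr : 2 * r v ≤ r u) :
    (2:ℝ) ^ i < (2:ℝ) ^ i' ∧ 2 * (2:ℝ) ^ i ≤ (2:ℝ) ^ i' ∧
      dist v pc' < 33 * (2:ℝ) ^ i' :=
  small_neighbor_cell_bound_general r i i' pc' v u hvr huc hur' hedge hirr
end
end
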